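/- Let γ = (5+δ)/(3+δ) with δ > 0, and let p₀, p_∞, T₀, T_∞ > 0, n₀ = p₀/(k_B T₀), n_∞ = p_∞/(k_B T_∞), u ∈ ℝ, and Mach number M_∞ = u·√(m/(γ k_B T_∞)). If n_∞(u² + k_B T_∞/m) − p₀/(2m) ≥ 0, then p_∞/p₀ ≥ 1/(2(1 + γ M_∞²)). -/

import Mathlib

/-! Since γ M∞² = m u²/(k_B T∞), the factor γ drops out: clearing denominators in the
half-moment condition gives p₀ k_B T∞ ≤ 2 p∞ (m u² + k_B T∞), which is the claimed bound. -/

lemma mul_sq_mul_sqrt_div_mul {γ m a : ℝ} (hγ : 0 < γ) (hma : 0 ≤ m / a) (u : ℝ) :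
    γ * (u * Real.sqrt (m / (γ * a))) ^ 2 = u ^ 2 * m / a := by
  have hnonneg : 0 ≤ m / (γ * a) := by
    rw [mul_comm, ← div_div]; exact div_nonneg hma hγ.le
  rw [mul_pow, Real.sq_sqrt hnonneg]
  field_simp

lemma one_div_two_mul_one_add_le_div {a m p₀ p u : ℝ} (ha : 0 < a) (hm : 0 < m) (hp₀ : 0 < p₀)
    (h : p₀ / (2 * m) ≤ p / a * (u ^ 2 + a / m)) :
    1 / (2 * (1 + u ^ 2 * m / a)) ≤ p / p₀ := by
  have hflux : p₀ * a ≤ 2 * p * (u ^ 2 * m + a) := by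
    rw [div_le_iff₀ (by positivity)] at h
    calc p₀ * a ≤ p / a * (u ^ 2 + a / m) * (2 * m) * a := by gcongr
      _ = 2 * p * (u ^ 2 * m + a) := by field_simp
  rw [div_le_div_iff₀ (by positivity) hp₀]
  calc 1 * p₀ = p₀ * a / a := by field_simp
    _ ≤ 2 * p * (u ^ 2 * m + a) / a := by gcongr
    _ = p * (2 * (1 + u ^ 2 * m / a)) := by field_simp; ring

theorem overall_necessary_condition
    (δ m kB p₀ pinf Tinf : ℝ) (u : ℝ)
    (hδ : 0 < δ) (hm : 0 < m) (hkB : 0 < kB)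
    (hp₀ : 0 < p₀) (hTinf : 0 < Tinf)
    (γ : ℝ) (hγ : γ = (5 + δ) / (3 + δ))
    (ninf : ℝ) (hninf : ninf = pinf / (kB * Tinf))
    (Minf : ℝ) (hM : Minf = u * Real.sqrt (m / (γ * kB * Tinf)))
    (hmom : 0 ≤ ninf * (u ^ 2 + kB * Tinf / m) - p₀ / (2 * m)) :
    pinf / p₀ ≥ 1 / (2 * (1 + γ * Minf ^ 2)) := by
  have hγpos : 0 < γ := by rw [hγ]; positivity
  have hkT : 0 < kB * Tinf := by positivity
  rw [hninf, sub_nonneg] at hmom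
  rw [ge_iff_le, hM, mul_assoc γ kB, mul_sq_mul_sqrt_div_mul hγpos (by positivity)]
  exact one_div_two_mul_one_add_le_div hkT hm hp₀ hmom
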